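/- arXiv:1503.04702 — 7 statements merged into one kernel-verified Lean document; each statement's English description precedes it below -/
import Mathlib

section
/- For any finite bipartite graph G with parts V1 and V2 such that V1 is nonempty, there exists a nonempty subset D of V1 such that |Odd_G(D)| ≤ |V2| / (2·(1 − 2^{−|V1|})). -/
/-!
For a vertex `v` with a neighbour `a ∈ V1`, toggling `a` in `D` flips the parity of the number
of neighbours of `v` in `D`, so exactly half of the subsets `D ⊆ V1` put `v` into `Odd(D)`; and
only vertices of `V2` have neighbours in `V1`. Hence `∑_{D ⊆ V1} |Odd(D)| ≤ |V2| 2^{|V1|-1}`.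
Since `Odd(∅) = ∅`, some of the `2^{|V1|} - 1` nonempty `D` has at most the average
`|V2| 2^{|V1|-1} / (2^{|V1|} - 1) = |V2| / (2 (1 - 2^{-|V1|}))`.
-/

open Finset

open Classical in
/-- The odd-neighbourhood of `D` in `G`: vertices having an odd number of neighbours in `D`. -/
noncomputable def oddNbhd {V : Type*} [Fintype V] (G : SimpleGraph V) (D : Finset V) :
    Finset V :=
  Finset.univ.filter fun v => Odd ((D.filter fun u => G.Adj v u).card)

theorem Finset.exists_card_nsmul_le_sum {ι M : Type*} [AddCommMonoid M] [LinearOrder M]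
    [IsOrderedCancelAddMonoid M] {s : Finset ι} (hs : s.Nonempty) (f : ι → M) :
    ∃ i ∈ s, #s • f i ≤ ∑ j ∈ s, f j :=
  exists_le_of_sum_le hs (by rw [← smul_sum, sum_const])

section OddSubsets

variable {α : Type*} [DecidableEq α] (p : α → Prop) [DecidablePred p]

theorem card_powerset_insert_filter_odd {a : α} {s : Finset α} (ha : a ∉ s) (hpa : p a) :
    #{t ∈ (insert a s).powerset | Odd #{x ∈ t | p x}} = 2 ^ #s := by
  have hflip : ∀ t ∈ s.powerset, Odd #{x ∈ insert a t | p x} ↔ ¬ Odd #{x ∈ t | p x} := by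
    intro t ht
    have hat : a ∉ {x ∈ t | p x} := fun h => ha (mem_powerset.1 ht (mem_filter.1 h).1)
    rw [filter_insert, if_pos hpa, card_insert_of_notMem hat, Nat.odd_add_one]
  rw [card_filter, sum_powerset_insert ha, ← sum_add_distrib, ← card_powerset, card_eq_sum_ones]
  refine sum_congr rfl fun t ht => ?_
  by_cases h : Odd #{x ∈ t | p x} <;> simp [hflip t ht, h]

theorem two_mul_card_powerset_filter_odd_le (s : Finset α) :
    2 * #{t ∈ s.powerset | Odd #{x ∈ t | p x}} ≤ 2 ^ #s := by
  by_cases h : ∃ a ∈ s, p a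
  · obtain ⟨a, ha, hpa⟩ := h
    have ha' := notMem_erase a s
    rw [← insert_erase ha, card_powerset_insert_filter_odd p ha' hpa, card_insert_of_notMem ha',
      pow_succ, mul_comm]
  · push Not at h
    have hempty : ∀ t ∈ s.powerset, {x ∈ t | p x} = ∅ := fun t ht =>
      filter_false_of_mem fun x hx => h x (mem_powerset.1 ht hx)
    rw [filter_false_of_mem fun t ht => by simp [hempty t ht]]
    simp

end OddSubsets

section OddNeighbourhood

open Classical

variable {V : Type*} [Fintype V] (G : SimpleGraph V)

theorem sum_card_oddNbhd_powerset (A : Finset V) :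
    ∑ D ∈ A.powerset, #(oddNbhd G D) =
      ∑ v, #{D ∈ A.powerset | Odd #{u ∈ D | G.Adj v u}} := by
  simp only [oddNbhd, card_filter]
  exact sum_comm

theorem two_mul_sum_card_oddNbhd_powerset_le {A B : Finset V}
    (hAB : ∀ u ∈ A, ∀ v, G.Adj v u → v ∈ B) :
    2 * ∑ D ∈ A.powerset, #(oddNbhd G D) ≤ #B * 2 ^ #A := by
  rw [sum_card_oddNbhd_powerset, mul_sum, ← sum_subset (subset_univ B)]
  · calc ∑ v ∈ B, 2 * #{D ∈ A.powerset | Odd #{u ∈ D | G.Adj v u}}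
        ≤ ∑ _v ∈ B, 2 ^ #A := sum_le_sum fun v _ => two_mul_card_powerset_filter_odd_le _ A
      _ = #B * 2 ^ #A := by rw [sum_const, smul_eq_mul]
  · intro v _ hv
    have hempty : ∀ D ∈ A.powerset, {u ∈ D | G.Adj v u} = ∅ := fun D hD =>
      filter_false_of_mem fun u hu hvu => hv (hAB u (mem_powerset.1 hD hu) v hvu)
    rw [filter_false_of_mem fun D hD => by simp [hempty D hD]]
    simp

end OddNeighbourhood

theorem le_div_two_mul_one_sub_two_zpow_neg {m b : ℝ} {n : ℕ} (hn : n ≠ 0)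
    (h : 2 * ((2 ^ n - 1) * m) ≤ b * 2 ^ n) :
    m ≤ b / (2 * (1 - 2 ^ (-(n : ℤ)))) := by
  have hpos : (0 : ℝ) < 2 ^ n - 1 := by
    have : (2 : ℝ) ≤ 2 ^ n := le_self_pow₀ (by norm_num) hn
    linarith
  have hden : 2 * (1 - (2 : ℝ) ^ (-(n : ℤ))) = 2 * (2 ^ n - 1) / 2 ^ n := by
    rw [zpow_neg, zpow_natCast]
    field_simp
  rw [hden, div_div_eq_mul_div, le_div_iff₀ (by positivity)]
  linarith

theorem exists_small_odd_nbhd_general {V : Type*} [Fintype V] (G : SimpleGraph V)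
    (V1 V2 : Finset V) (hdisj : Disjoint V1 V2)
    (hbip : ∀ u v : V, G.Adj u v → (u ∈ V1 ∧ v ∈ V2) ∨ (u ∈ V2 ∧ v ∈ V1))
    (hV1 : V1.Nonempty) :
    ∃ D : Finset V, D.Nonempty ∧ D ⊆ V1 ∧
      ((oddNbhd G D).card : ℝ) ≤ (V2.card : ℝ) / (2 * (1 - (2 : ℝ) ^ (-(V1.card : ℤ)))) := by
  classical
  have hnbr : ∀ u ∈ V1, ∀ v, G.Adj v u → v ∈ V2 := fun u hu v hvu =>
    ((hbip v u hvu).resolve_left fun h => disjoint_left.1 hdisj hu h.2).1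
  set S := V1.powerset.erase ∅
  have hS : S.Nonempty := ⟨V1, mem_erase.2 ⟨hV1.ne_empty, mem_powerset_self V1⟩⟩
  obtain ⟨D, hDS, hD⟩ := exists_card_nsmul_le_sum hS fun D => #(oddNbhd G D)
  have hsum : ∑ E ∈ S, #(oddNbhd G E) = ∑ E ∈ V1.powerset, #(oddNbhd G E) :=
    sum_erase _ (by simp [oddNbhd])
  have hcard : (#S : ℝ) = 2 ^ #V1 - 1 := by
    rw [eq_sub_iff_add_eq]
    exact_mod_cast (card_erase_add_one (empty_mem_powerset V1)).trans (card_powerset V1)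
  refine ⟨D, nonempty_iff_ne_empty.2 (ne_of_mem_erase hDS), mem_powerset.1 (mem_of_mem_erase hDS),
    le_div_two_mul_one_sub_two_zpow_neg hV1.card_pos.ne' ?_⟩
  have hnat : 2 * (#S * #(oddNbhd G D)) ≤ #V2 * 2 ^ #V1 := by
    rw [smul_eq_mul, hsum] at hD
    exact (Nat.mul_le_mul_left 2 hD).trans (two_mul_sum_card_oddNbhd_powerset_le G hnbr)
  rw [← hcard]
  exact_mod_cast hnat

/-- For any finite bipartite graph `G` with parts `V1`, `V2` and `V1` nonempty, there is a
nonempty `D ⊆ V1` with `|Odd_G(D)| ≤ |V2| / (2 (1 - 2^{-|V1|}))`. -/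
theorem exists_small_odd_nbhd {V : Type*} [Fintype V] [DecidableEq V] (G : SimpleGraph V)
    (V1 V2 : Finset V) (hdisj : Disjoint V1 V2) (hcover : V1 ∪ V2 = Finset.univ)
    (hbip : ∀ u v : V, G.Adj u v → (u ∈ V1 ∧ v ∈ V2) ∨ (u ∈ V2 ∧ v ∈ V1))
    (hV1 : V1.Nonempty) :
    ∃ D : Finset V, D.Nonempty ∧ D ⊆ V1 ∧
      ((oddNbhd G D).card : ℝ) ≤ (V2.card : ℝ) / (2 * (1 - (2 : ℝ) ^ (-(V1.card : ℤ)))) :=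
  exists_small_odd_nbhd_general G V1 V2 hdisj hbip hV1
end

section
/- For every binary linear code of length n and dimension k ≥ 1 (i.e., a k-dimensional subspace C of the vector space of functions from Fin n to ZMod 2), there exists a nonzero codeword of Hamming weight at most n / (2·(1 − 2^{−k})). -/
/-!
Average over the code: each coordinate is a homomorphism `C → ZMod 2`, so it is nonzero on
either none or exactly half of the `2^k` codewords, and the total weight of `C` is at most
`n 2^(k-1)`. The `2^k - 1` nonzero codewords all weigh at least the minimum weight `d`, hence
`(2^k - 1) d ≤ n 2^(k-1)`.
-/

open Finset

theorem sum_hammingNorm_eq_sum_card_filter {α ι : Type*} [Fintype α] [Fintype ι]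
    {β : ι → Type*} [∀ i, Zero (β i)] [∀ i, DecidableEq (β i)] (φ : α → ∀ i, β i) :
    ∑ a, hammingNorm (φ a) = ∑ i, #{a | φ a i ≠ 0} := by
  simp only [hammingNorm, card_filter]
  exact sum_comm

section

variable {G : Type*} [AddCommGroup G] [Fintype G]

theorem two_mul_card_filter_ne_zero_le (f : G →+ ZMod 2) :
    2 * #{x | f x ≠ 0} ≤ Fintype.card G := by
  classical
  obtain ⟨x₀, hx₀⟩ | hempty := (univ.filter fun x => f x ≠ 0).eq_empty_or_nonempty.symm
  · -- translating by `x₀` maps `{f ≠ 0}` injectively into `{f = 0}`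
    have hodd_add_odd : ∀ a b : ZMod 2, a ≠ 0 → b ≠ 0 → a + b = 0 := by decide
    have hle : #{x | f x ≠ 0} ≤ #{x | ¬ f x ≠ 0} := by
      refine card_le_card_of_injOn (· + x₀) (fun x hx => ?_) (fun a _ b _ => add_right_cancel)
      simp only [coe_filter, mem_filter, mem_univ, true_and, Set.mem_ofPred_eq, not_not] at hx hx₀ ⊢
      rw [map_add]
      exact hodd_add_odd _ _ hx hx₀
    have := card_filter_add_card_filter_not (s := univ) (fun x => f x ≠ 0)
    rw [card_univ] at this
    omega
  · simp [hempty]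

theorem exists_ne_zero_card_sub_one_mul_le_sum [Nontrivial G] (w : G → ℕ) :
    ∃ g, g ≠ 0 ∧ (Fintype.card G - 1) * w g ≤ ∑ x, w x := by
  classical
  obtain ⟨g₁, hg₁⟩ := exists_ne (0 : G)
  obtain ⟨g, hg, hmin⟩ := (univ.erase (0 : G)).exists_min_image w ⟨g₁, by simp [hg₁]⟩
  refine ⟨g, ne_of_mem_erase hg, ?_⟩
  calc (Fintype.card G - 1) * w g = #(univ.erase (0 : G)) • w g := by
        rw [card_erase_of_mem (mem_univ _), card_univ, smul_eq_mul]
    _ ≤ ∑ x ∈ univ.erase 0, w x := card_nsmul_le_sum _ _ _ hmin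
    _ ≤ ∑ x, w x := sum_le_sum_of_subset (subset_univ _)

variable {ι : Type*} [Fintype ι]

theorem two_mul_sum_hammingNorm_le (φ : G →+ ι → ZMod 2) :
    2 * ∑ g, hammingNorm (φ g) ≤ Fintype.card ι * Fintype.card G := by
  rw [sum_hammingNorm_eq_sum_card_filter, mul_sum]
  calc ∑ i, 2 * #{g | φ g i ≠ 0} ≤ ∑ _i : ι, Fintype.card G :=
        sum_le_sum fun i _ => two_mul_card_filter_ne_zero_le ((Pi.evalAddMonoidHom _ i).comp φ)
    _ = Fintype.card ι * Fintype.card G := by rw [sum_const, card_univ, smul_eq_mul]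

end

theorem le_div_two_mul_one_sub_inv {w n N : ℝ} (hN : 1 < N) (h : 2 * (N - 1) * w ≤ n * N) :
    w ≤ n / (2 * (1 - N⁻¹)) := by
  have hN₀ : 0 < N := by linarith
  have hinv : N⁻¹ < 1 := inv_lt_one_of_one_lt₀ hN
  rw [le_div_iff₀ (by linarith)]
  field_simp
  linarith

/-- Plotkin bound: every binary linear code of length `n` and dimension `k ≥ 1` contains a
nonzero codeword of Hamming weight at most `n / (2 (1 - 2^{-k}))`. -/
theorem plotkin_bound (n k : ℕ) (hk : 1 ≤ k)
    (C : Submodule (ZMod 2) (Fin n → ZMod 2))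
    (hdim : Module.finrank (ZMod 2) C = k) :
    ∃ c : Fin n → ZMod 2, c ∈ C ∧ c ≠ 0 ∧
      (hammingNorm c : ℝ) ≤ (n : ℝ) / (2 * (1 - (2 : ℝ) ^ (-(k : ℤ)))) := by
  classical
  have := Fintype.ofFinite C
  have hcard : Fintype.card C = 2 ^ k := by
    rw [Module.card_eq_pow_finrank (K := ZMod 2), ZMod.card, hdim]
  have : Nontrivial C := (Module.finrank_pos_iff (R := ZMod 2)).mp (by omega)
  obtain ⟨c, hc, hmin⟩ :=
    exists_ne_zero_card_sub_one_mul_le_sum fun c : C => hammingNorm (c : Fin n → ZMod 2)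
  have hsum := two_mul_sum_hammingNorm_le C.subtype.toAddMonoidHom
  simp only [LinearMap.toAddMonoidHom_coe, Submodule.coe_subtype, Fintype.card_fin, hcard]
    at hsum hmin
  have hweight : 2 * ((2 ^ k - 1) * hammingNorm (c : Fin n → ZMod 2)) ≤ n * 2 ^ k :=
    (Nat.mul_le_mul_left 2 hmin).trans hsum
  refine ⟨c, c.2, by simpa using hc, ?_⟩
  rw [zpow_neg, zpow_natCast]
  refine le_div_two_mul_one_sub_inv (one_lt_pow₀ one_lt_two (by omega)) ?_
  have := (Nat.cast_le (α := ℝ)).mpr hweight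
  push_cast [Nat.one_le_two_pow] at this
  linarith
end

section
/- For any finite simple graph G with vertex cover number τ(G) > 0, one has 2·δ_loc(G) ≤ τ(G) + log₂(τ(G)) + 1, where δ_loc(G) + 1 = min over all nonempty vertex subsets D of |D ∪ Odd_G(D)|. -/
/-!
Let `C` be a minimum vertex cover, `τ = |C|` and `t = ⌊log₂ τ⌋ + 1`, so `2^(t-1) ≤ τ < 2^t`.
By minimality every vertex of `C` has a neighbour in the independent set `I = V \ C`. Choose
`A ⊆ I` and `B ⊆ C` whose vertices all have the same neighbourhood in `I`: if `|I| ≥ t` take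
`|A| = t` and `B = ∅`, otherwise take `A = I` and, by pigeonhole on the at most `2^|I| - 1`
possible neighbourhoods of the `τ ≥ 2^(t-1)` vertices of `C`, a set `B` of `t + 1 - |I|` twins.

The sets `D ⊆ A ∪ B` with `|D ∩ B|` even form a family `𝒟` of size `2^t` closed under symmetric
difference, and `Odd(D) ⊆ C` for `D ∈ 𝒟`. Both `v ∈ D` and `v ∈ Odd(D)` are additive over `𝔽₂`
in `D`, so each holds for none or exactly half of `𝒟`; hence a vertex lies in `D ∪ Odd(D)` for at
most half of `𝒟`, or three quarters if it is in `B`. Averaging over the `2^t - 1` nonempty members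
of `𝒟` yields `D` with `2 |D ∪ Odd(D)| ≤ τ + t + 2`.
-/

open Finset

open scoped symmDiff

namespace Finset

variable {α : Type*} [DecidableEq α]

def XorAdditive (f : Finset α → Prop) : Prop :=
  ∀ D E, f (D ∆ E) ↔ Xor (f D) (f E)

def IsSymmDiffClosed (𝒟 : Finset (Finset α)) : Prop :=
  ∀ D ∈ 𝒟, ∀ E ∈ 𝒟, D ∆ E ∈ 𝒟

lemma card_symmDiff_add_two_mul_card_inter (s t : Finset α) :
    #(s ∆ t) + 2 * #(s ∩ t) = #s + #t := by
  rw [symmDiff_eq_sup_sdiff_inf, sup_eq_union, inf_eq_inter,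
    card_sdiff_of_subset inter_subset_union, ← card_union_add_card_inter s t]
  have := card_le_card (inter_subset_union (s := s) (t := t))
  omega

lemma odd_card_symmDiff_iff (s t : Finset α) : Odd #(s ∆ t) ↔ Xor (Odd #s) (Odd #t) := by
  rw [xor_iff_iff_not, Nat.not_odd_iff_even, ← Nat.odd_add,
    ← card_symmDiff_add_two_mul_card_inter]
  simp [Nat.odd_add]

lemma filter_symmDiff (p : α → Prop) [DecidablePred p] (s t : Finset α) :
    (s ∆ t).filter p = s.filter p ∆ t.filter p := by
  ext a
  simp only [mem_filter, mem_symmDiff]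
  tauto

lemma xorAdditive_mem (a : α) : XorAdditive (a ∈ · : Finset α → Prop) :=
  fun _ _ => mem_symmDiff

lemma xorAdditive_odd_card_filter (p : α → Prop) [DecidablePred p] :
    XorAdditive (fun D : Finset α => Odd #(D.filter p)) := fun D E => by
  simp only [filter_symmDiff, odd_card_symmDiff_iff]

lemma xorAdditive_odd_card_inter (B : Finset α) :
    XorAdditive (fun D : Finset α => Odd #(D ∩ B)) := fun D E => by
  simp only [← inf_eq_inter, inf_symmDiff_distrib_right, odd_card_symmDiff_iff]

variable {𝒟 : Finset (Finset α)} {f g : Finset α → Prop} [DecidablePred f] [DecidablePred g]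

lemma XorAdditive.two_mul_card_filter_eq (hf : XorAdditive f) (h𝒟 : IsSymmDiffClosed 𝒟)
    {s : Finset α} (hs : s ∈ 𝒟) (hfs : f s) : 2 * #(𝒟.filter f) = #𝒟 := by
  have hflip : #(𝒟.filter f) = #(𝒟.filter (¬ f ·)) := by
    refine card_nbij' (· ∆ s) (· ∆ s) ?_ ?_ ?_ ?_ <;>
      simp +contextual [Set.MapsTo, Set.LeftInvOn, hf _ s, hfs, h𝒟 _ _ s hs, xor_iff_iff_not]
  rw [two_mul, ← card_filter_add_card_filter_not (s := 𝒟) f, hflip]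

lemma XorAdditive.two_mul_card_filter_le (hf : XorAdditive f) (h𝒟 : IsSymmDiffClosed 𝒟) :
    2 * #(𝒟.filter f) ≤ #𝒟 := by
  by_cases h : ∃ s ∈ 𝒟, f s
  · obtain ⟨s, hs, hfs⟩ := h
    exact (hf.two_mul_card_filter_eq h𝒟 hs hfs).le
  · simp only [not_exists, not_and] at h
    simp [filter_false_of_mem h]

lemma IsSymmDiffClosed.filter_not (h𝒟 : IsSymmDiffClosed 𝒟) (hf : XorAdditive f) :
    IsSymmDiffClosed (𝒟.filter (¬ f ·)) := by
  intro D hD E hE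
  simp only [mem_filter] at hD hE ⊢
  exact ⟨h𝒟 D hD.1 E hE.1, by simp [hf D E, hD.2, hE.2]⟩

lemma XorAdditive.four_mul_card_filter_or_le (hf : XorAdditive f) (hg : XorAdditive g)
    (h𝒟 : IsSymmDiffClosed 𝒟) : 4 * #(𝒟.filter (fun D => f D ∨ g D)) ≤ 3 * #𝒟 := by
  have hsplit : 𝒟.filter (fun D => f D ∨ g D) = 𝒟.filter f ∪ (𝒟.filter (¬ f ·)).filter g := by
    ext D
    simp only [mem_filter, mem_union]
    tauto
  have hf_le := hf.two_mul_card_filter_le h𝒟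
  have hg_le := hg.two_mul_card_filter_le (h𝒟.filter_not hf)
  have hsum := card_filter_add_card_filter_not (s := 𝒟) f
  have := card_union_le (𝒟.filter f) ((𝒟.filter (¬ f ·)).filter g)
  rw [hsplit]
  omega

lemma isSymmDiffClosed_powerset (s : Finset α) : IsSymmDiffClosed s.powerset := by
  intro D hD E hE
  rw [mem_powerset] at *
  exact symmDiff_subset_union.trans (union_subset hD hE)

def evenFamily (A B : Finset α) : Finset (Finset α) :=
  (A ∪ B).powerset.filter (fun D => Even #(D ∩ B))

lemma isSymmDiffClosed_evenFamily (A B : Finset α) : IsSymmDiffClosed (evenFamily A B) := by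
  simp only [evenFamily, ← Nat.not_odd_iff_even]
  exact (isSymmDiffClosed_powerset _).filter_not (xorAdditive_odd_card_inter B)

lemma empty_mem_evenFamily (A B : Finset α) : ∅ ∈ evenFamily A B := by
  simp [evenFamily]

lemma singleton_mem_evenFamily {A : Finset α} (B : Finset α) {a : α} (ha : a ∈ A)
    (hAB : Disjoint A B) : {a} ∈ evenFamily A B := by
  refine mem_filter.mpr ⟨?_, ?_⟩
  · simp only [mem_powerset, singleton_subset_iff, mem_union, ha, true_or]
  · simp [singleton_inter_of_notMem (disjoint_left.mp hAB ha)]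

lemma evenFamily_empty_right (A : Finset α) : evenFamily A ∅ = A.powerset := by
  simp [evenFamily]

lemma two_mul_card_evenFamily {A B : Finset α} (hAB : Disjoint A B) (hB : B.Nonempty) :
    2 * #(evenFamily A B) = 2 ^ (#A + #B) := by
  obtain ⟨b, hb⟩ := hB
  have hodd := (xorAdditive_odd_card_inter B).two_mul_card_filter_eq
    (isSymmDiffClosed_powerset (A ∪ B)) (s := {b})
    (by simp only [mem_powerset, singleton_subset_iff, mem_union, hb, or_true])
    (by simp [singleton_inter_of_mem hb])
  have hsplit := card_filter_add_card_filter_not (s := (A ∪ B).powerset) (fun D => Odd #(D ∩ B))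
  simp only [card_powerset, card_union_of_disjoint hAB, Nat.not_odd_iff_even] at hodd hsplit
  rw [evenFamily]
  omega

lemma exists_ne_mul_le_of_sum_le {ι : Type*} [DecidableEq ι] {s : Finset ι} {a : ι} (ha : a ∈ s)
    (hs : 2 ≤ #s) {φ : ι → ℕ} (hφ : φ a = 0) {M : ℕ} (hM : ∑ i ∈ s, φ i ≤ M) :
    ∃ i ∈ s, i ≠ a ∧ (#s - 1) * φ i ≤ M := by
  have hne : (s.erase a).Nonempty := by
    rw [← card_pos, card_erase_of_mem ha]; omega
  obtain ⟨i, hi, hle⟩ := exists_le_of_sum_le hne (f := fun i => (#s - 1) * φ i) (g := fun _ => M)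
    (by rw [← mul_sum, sum_erase _ hφ, sum_const, card_erase_of_mem ha, smul_eq_mul]
        exact Nat.mul_le_mul_left _ hM)
  exact ⟨i, mem_of_mem_erase hi, ne_of_mem_erase hi, hle⟩

end Finset

lemma two_pow_sub_one_mul_sub_lt {k t : ℕ} (hkt : k < t) :
    (2 ^ k - 1) * (t - k) < 2 ^ (t - 1) := by
  obtain ⟨m, rfl⟩ := Nat.exists_eq_add_of_lt hkt
  have hm : m < 2 ^ m := Nat.lt_two_pow_self
  have hk : 0 < 2 ^ k := Nat.two_pow_pos k
  calc (2 ^ k - 1) * (k + m + 1 - k) < 2 ^ k * (m + 1) := by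
        rw [show k + m + 1 - k = m + 1 by omega]
        exact Nat.mul_lt_mul_of_pos_right (by omega) (by omega)
    _ ≤ 2 ^ k * 2 ^ m := Nat.mul_le_mul_left _ hm
    _ = 2 ^ (k + m + 1 - 1) := by rw [← pow_add]; rfl

lemma two_mul_le_of_two_pow_sub_one_mul_le {t τ v a b : ℕ} (ht : 0 < t) (hτ : τ < 2 ^ t)
    (hab : 2 * a + b ≤ 2 * t) (h : (2 ^ t - 1) * (4 * v) ≤ 2 ^ t * (2 * (a + τ) + b)) :
    2 * v ≤ τ + t + 2 := by
  have htN : t < 2 ^ t := Nat.lt_two_pow_self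
  obtain ⟨N, hN⟩ : ∃ N, 2 ^ t = N + 1 := ⟨2 ^ t - 1, by omega⟩
  rw [hN, Nat.add_sub_cancel] at h
  rw [hN] at hτ htN
  by_contra! hv
  nlinarith

namespace SimpleGraph

variable {V : Type*} {G : SimpleGraph V}

lemma IsVertexCover.exists_adj_notMem [DecidableEq V] {C : Finset V} (hC : G.IsVertexCover C)
    (hmin : ∀ S : Finset V, G.IsVertexCover S → #C ≤ #S) {c : V} (hc : c ∈ C) :
    ∃ v ∉ C, G.Adj c v := by
  by_contra! h
  have hcov : G.IsVertexCover (C.erase c : Finset V) := by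
    intro u w huw
    simp only [coe_erase, Set.mem_sdiff, mem_coe, Set.mem_singleton_iff]
    have := G.ne_of_adj huw
    have := hC huw
    grind [G.adj_symm huw]
  have := hmin _ hcov
  rw [card_erase_of_mem hc] at this
  have := card_pos.mpr ⟨c, hc⟩
  omega

variable [Fintype V]

lemma mem_oddNbhd [DecidableRel G.Adj] {D : Finset V} {v : V} :
    v ∈ oddNbhd G D ↔ Odd #(D.filter (G.Adj v ·)) := by
  simp only [oddNbhd, mem_filter, mem_univ, true_and]
  congr! 3

variable [DecidableEq V]

lemma xorAdditive_mem_oddNbhd (G : SimpleGraph V) (v : V) :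
    XorAdditive (v ∈ oddNbhd G ·) := by
  classical
  simp only [mem_oddNbhd]
  exact xorAdditive_odd_card_filter _

variable {A B C : Finset V}

lemma notMem_oddNbhd_of_notMem_cover (hC : G.IsVertexCover C) (hAC : Disjoint A C)
    (hB : ∀ w ∉ C, ∀ b ∈ B, ∀ b' ∈ B, G.Adj w b → G.Adj w b') {D : Finset V}
    (hD : D ∈ evenFamily A B) {w : V} (hw : w ∉ C) : w ∉ oddNbhd G D := by
  classical
  obtain ⟨hDAB, hDeven⟩ := mem_filter.mp hD
  rw [mem_powerset] at hDAB
  have hnbr : ∀ u ∈ D, G.Adj w u → u ∈ B := fun u hu hwu =>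
    (mem_union.mp (hDAB hu)).resolve_left
      fun huA => Finset.disjoint_left.mp hAC huA ((hC hwu).resolve_left hw)
  rw [mem_oddNbhd, Nat.not_odd_iff_even]
  by_cases h : ∃ b ∈ D ∩ B, G.Adj w b
  · obtain ⟨b, hb, hwb⟩ := h
    have hall : D.filter (G.Adj w ·) = D ∩ B := by
      ext u
      simp only [mem_filter, mem_inter]
      exact ⟨fun ⟨hu, hwu⟩ => ⟨hu, hnbr u hu hwu⟩,
        fun ⟨hu, huB⟩ => ⟨hu, hB w hw b (mem_inter.mp hb).2 u huB hwb⟩⟩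
    rwa [hall]
  · have hnone : D.filter (G.Adj w ·) = ∅ := filter_eq_empty_iff.mpr
      fun u hu hwu => h ⟨u, mem_inter.mpr ⟨hu, hnbr u hu hwu⟩, hwu⟩
    simp [hnone]

lemma four_mul_sum_card_union_oddNbhd_le (hC : G.IsVertexCover C) (hAC : Disjoint A C)
    (hBC : B ⊆ C) (hB : ∀ w ∉ C, ∀ b ∈ B, ∀ b' ∈ B, G.Adj w b → G.Adj w b') :
    4 * ∑ D ∈ evenFamily A B, #(D ∪ oddNbhd G D)
      ≤ #(evenFamily A B) * (2 * (#A + #C) + #B) := by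
  set 𝒟 := evenFamily A B
  have h𝒟 : IsSymmDiffClosed 𝒟 := isSymmDiffClosed_evenFamily A B
  have hsub : ∀ D ∈ 𝒟, D ⊆ A ∪ B := fun D hD => mem_powerset.mp (mem_filter.mp hD).1
  have hodd : ∀ D ∈ 𝒟, oddNbhd G D ⊆ C := fun D hD w hw =>
    by_contra fun hwC => notMem_oddNbhd_of_notMem_cover hC hAC hB hD hwC hw
  have hcount : ∑ D ∈ 𝒟, #(D ∪ oddNbhd G D)
      = ∑ w ∈ A ∪ C, #(𝒟.filter (fun D => w ∈ D ∪ oddNbhd G D)) := by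
    calc ∑ D ∈ 𝒟, #(D ∪ oddNbhd G D) = ∑ D ∈ 𝒟, #((A ∪ C) ∩ (D ∪ oddNbhd G D)) :=
          sum_congr rfl fun D hD => by
            rw [inter_eq_right.mpr (union_subset ((hsub D hD).trans (union_subset_union_right hBC))
              ((hodd D hD).trans subset_union_right))]
      _ = _ := by
          simp_rw [← filter_mem_eq_inter, card_eq_sum_ones, sum_filter]
          exact sum_comm
  have hmemB : ∀ w ∈ B, 4 * #(𝒟.filter (fun D => w ∈ D ∪ oddNbhd G D)) ≤ 3 * #𝒟 := by
    intro w _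
    simp only [mem_union]
    exact (xorAdditive_mem w).four_mul_card_filter_or_le (xorAdditive_mem_oddNbhd G w) h𝒟
  have hnotB : ∀ w ∈ (A ∪ C) \ B, 2 * #(𝒟.filter (fun D => w ∈ D ∪ oddNbhd G D)) ≤ #𝒟 := by
    intro w hw
    obtain ⟨hwAC, hwB⟩ := mem_sdiff.mp hw
    rcases mem_union.mp hwAC with hwA | hwC
    · have hwC : w ∉ C := Finset.disjoint_left.mp hAC hwA
      rw [filter_congr (q := (w ∈ ·)) fun D hD => by
        simp only [mem_union, notMem_oddNbhd_of_notMem_cover hC hAC hB hD hwC, or_false]]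
      exact (xorAdditive_mem w).two_mul_card_filter_le h𝒟
    · have hwA : w ∉ A := Finset.disjoint_right.mp hAC hwC
      rw [filter_congr (q := (w ∈ oddNbhd G ·)) fun D hD => by
        have hwD : w ∉ D := fun hwD => (mem_union.mp (hsub D hD hwD)).elim hwA hwB
        simp only [mem_union, hwD, false_or]]
      exact (xorAdditive_mem_oddNbhd G w).two_mul_card_filter_le h𝒟
  have hBAC : B ⊆ A ∪ C := hBC.trans subset_union_right
  have hcard : #((A ∪ C) \ B) + #B = #A + #C := by
    rw [card_sdiff_add_card_eq_card hBAC, card_union_of_disjoint hAC]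
  calc 4 * ∑ D ∈ 𝒟, #(D ∪ oddNbhd G D)
      = 2 * ∑ w ∈ (A ∪ C) \ B, 2 * #(𝒟.filter (fun D => w ∈ D ∪ oddNbhd G D))
        + ∑ w ∈ B, 4 * #(𝒟.filter (fun D => w ∈ D ∪ oddNbhd G D)) := by
        rw [hcount, ← sum_sdiff hBAC, ← mul_sum, ← mul_sum]
        ring
    _ ≤ 2 * ∑ _w ∈ (A ∪ C) \ B, #𝒟 + ∑ _w ∈ B, 3 * #𝒟 :=
        add_le_add (Nat.mul_le_mul_left 2 (sum_le_sum hnotB)) (sum_le_sum hmemB)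
    _ = #𝒟 * (2 * (#A + #C) + #B) := by
        rw [sum_const, sum_const, smul_eq_mul, smul_eq_mul, ← hcard]
        ring

lemma exists_nonempty_mul_card_union_oddNbhd_le (hC : G.IsVertexCover C) (hAC : Disjoint A C)
    (hBC : B ⊆ C) (hB : ∀ w ∉ C, ∀ b ∈ B, ∀ b' ∈ B, G.Adj w b → G.Adj w b') (hA : A.Nonempty) :
    ∃ D : Finset V, D.Nonempty ∧ (#(evenFamily A B) - 1) * (4 * #(D ∪ oddNbhd G D))
      ≤ #(evenFamily A B) * (2 * (#A + #C) + #B) := by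
  obtain ⟨a, ha⟩ := hA
  have htwo : 2 ≤ #(evenFamily A B) := one_lt_card.mpr
    ⟨{a}, singleton_mem_evenFamily B ha (hAC.mono_right hBC), ∅, empty_mem_evenFamily A B,
      singleton_ne_empty a⟩
  obtain ⟨D, -, hD, hle⟩ := exists_ne_mul_le_of_sum_le (empty_mem_evenFamily A B) htwo
    (φ := fun D => 4 * #(D ∪ oddNbhd G D)) (by simp [oddNbhd])
    (M := #(evenFamily A B) * (2 * (#A + #C) + #B))
    (by rw [← mul_sum]; exact four_mul_sum_card_union_oddNbhd_le hC hAC hBC hB)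
  exact ⟨D, nonempty_iff_ne_empty.mpr hD, hle⟩

lemma exists_evenFamily_card_eq_two_pow (hmin : ∀ c ∈ C, ∃ v ∉ C, G.Adj c v) {t : ℕ}
    (ht : 0 < t) (hCt : 2 ^ (t - 1) ≤ #C) :
    ∃ A B : Finset V, A.Nonempty ∧ Disjoint A C ∧ B ⊆ C ∧
      (∀ w ∉ C, ∀ b ∈ B, ∀ b' ∈ B, G.Adj w b → G.Adj w b') ∧
      #(evenFamily A B) = 2 ^ t ∧ 2 * #A + #B ≤ 2 * t := by
  classical
  by_cases hI : t ≤ #Cᶜ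
  · obtain ⟨A, hA, hAcard⟩ := exists_subset_card_eq hI
    refine ⟨A, ∅, card_pos.mp (by omega), disjoint_compl_left.mono_left hA, empty_subset C,
      by simp, by rw [evenFamily_empty_right, card_powerset, hAcard], by simp [hAcard]⟩
  rw [not_le] at hI
  obtain ⟨c, hc⟩ : C.Nonempty := card_pos.mp (lt_of_lt_of_le (Nat.two_pow_pos _) hCt)
  have hIne : (Cᶜ).Nonempty := by
    obtain ⟨v, hv, -⟩ := hmin c hc
    exact ⟨v, mem_compl.mpr hv⟩
  have hmaps : ∀ c ∈ C, Cᶜ.filter (G.Adj c) ∈ Cᶜ.powerset.erase ∅ := by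
    intro c hc
    obtain ⟨v, hv, hcv⟩ := hmin c hc
    exact mem_erase.mpr ⟨ne_empty_of_mem (mem_filter.mpr ⟨mem_compl.mpr hv, hcv⟩),
      mem_powerset.mpr (filter_subset _ _)⟩
  have hcount : #(Cᶜ.powerset.erase ∅) * (t - #Cᶜ) < #C := by
    rw [card_erase_of_mem (empty_mem_powerset _), card_powerset]
    exact (two_pow_sub_one_mul_sub_lt hI).trans_le hCt
  obtain ⟨P, -, hP⟩ := exists_lt_card_fiber_of_mul_lt_card_of_maps_to hmaps hcount
  obtain ⟨B, hBP, hBcard⟩ := exists_subset_card_eq (Nat.succ_le_of_lt hP)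
  have hBC : B ⊆ C := hBP.trans (filter_subset _ _)
  have hpattern : ∀ b ∈ B, Cᶜ.filter (G.Adj b) = P := fun b hb => (mem_filter.mp (hBP hb)).2
  refine ⟨Cᶜ, B, hIne, disjoint_compl_left, hBC, ?_, ?_, by omega⟩
  · intro w hw b hb b' hb' hwb
    have hw' : w ∈ Cᶜ.filter (G.Adj b') := by
      rw [hpattern b' hb', ← hpattern b hb]
      exact mem_filter.mpr ⟨mem_compl.mpr hw, hwb.symm⟩
    exact (mem_filter.mp hw').2.symm
  · have h2 := two_mul_card_evenFamily (disjoint_compl_left.mono_right hBC)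
      (card_pos.mp (by omega : 0 < #B))
    rw [hBcard, show #Cᶜ + (t - #Cᶜ + 1) = t + 1 by omega, pow_succ] at h2
    omega

lemma exists_two_mul_card_union_oddNbhd_le (hC : G.IsVertexCover C)
    (hmin : ∀ c ∈ C, ∃ v ∉ C, G.Adj c v) {t : ℕ} (ht : 0 < t) (hCt : 2 ^ (t - 1) ≤ #C)
    (hCt' : #C < 2 ^ t) :
    ∃ D : Finset V, D.Nonempty ∧ 2 * #(D ∪ oddNbhd G D) ≤ #C + t + 2 := by
  obtain ⟨A, B, hA, hAC, hBC, hB, hcard, hAB⟩ := exists_evenFamily_card_eq_two_pow hmin ht hCt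
  obtain ⟨D, hD, hle⟩ := exists_nonempty_mul_card_union_oddNbhd_le hC hAC hBC hB hA
  rw [hcard] at hle
  exact ⟨D, hD, two_mul_le_of_two_pow_sub_one_mul_le ht hCt' hAB hle⟩

end SimpleGraph

/-- For any finite simple graph `G` with vertex cover number `τ(G) > 0`,
`2 δ_loc(G) ≤ τ(G) + log₂(τ(G)) + 1`, where
`δ_loc(G) + 1 = min_{∅ ≠ D ⊆ V} |D ∪ Odd_G(D)|`. -/
theorem two_dloc_le_tau_add_log_add_one {V : Type*} [Fintype V] [DecidableEq V]
    (G : SimpleGraph V) (dloc tau : ℕ)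
    (hd : dloc + 1 = sInf {m : ℕ | ∃ D : Finset V, D.Nonempty ∧ (D ∪ oddNbhd G D).card = m})
    (ht : tau = sInf {m : ℕ | ∃ S : Finset V,
      (∀ u v : V, G.Adj u v → u ∈ S ∨ v ∈ S) ∧ S.card = m})
    (htau : 0 < tau) :
    2 * (dloc : ℝ) ≤ (tau : ℝ) + Real.logb 2 (tau : ℝ) + 1 := by
  have hcovers : {m : ℕ | ∃ S : Finset V,
      (∀ u v : V, G.Adj u v → u ∈ S ∨ v ∈ S) ∧ #S = m}.Nonempty :=
    ⟨_, univ, fun u _ _ => Or.inl (mem_univ u), rfl⟩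
  obtain ⟨C, hC, hCcard⟩ := Nat.sInf_mem hcovers
  rw [← ht] at hCcard
  have hCmin : ∀ S : Finset V, G.IsVertexCover S → #C ≤ #S := fun S hS => by
    rw [hCcard, ht]; exact Nat.sInf_le ⟨S, fun _ _ huv => hS huv, rfl⟩
  have hCcov : G.IsVertexCover C := fun u v huv => hC u v huv
  obtain ⟨D, hD, hDcard⟩ := SimpleGraph.exists_two_mul_card_union_oddNbhd_le hCcov
    (fun c hc => hCcov.exists_adj_notMem hCmin hc) (t := Nat.log 2 tau + 1) (Nat.succ_pos _)
    (by rw [hCcard]; exact Nat.pow_log_le_self 2 htau.ne')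
    (by rw [hCcard]; exact Nat.lt_pow_succ_log_self one_lt_two tau)
  have hdloc : dloc + 1 ≤ #(D ∪ oddNbhd G D) := by
    rw [hd]; exact Nat.sInf_le ⟨D, hD, rfl⟩
  have hnat : 2 * dloc ≤ tau + Nat.log 2 tau + 1 := by omega
  have hlog := Real.natLog_le_logb tau 2
  push_cast at hlog
  have : (2 * dloc : ℝ) ≤ tau + Nat.log 2 tau + 1 := by exact_mod_cast hnat
  linarith
end

section
/- For any finite bipartite graph G of order n > 0, one has δ_loc(G) < n/4 + log₂(n). -/
open Finset

/-!
Let `B` be the smaller side of the bipartition, so that `I = Bᶜ` is an independent set with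
`n ≤ 2 |I|`, and pick `S ⊆ I` with `|S| = j = ⌊log₂ n⌋`. For an independent `D`, a vertex `v`
lies in `D ∪ Odd(D)` iff `|D ∩ N[v]|` is odd; as `D` ranges over the subsets of `S` this happens
for exactly half of them when `N[v]` meets `S`, and never otherwise. Only the vertices of `S ∪ B`
have a closed neighbourhood meeting `S`, so averaging over the `2^j - 1` nonempty `D ⊆ S` gives one
with `|D ∪ Odd(D)| ≤ 2^(j-1) (j + n/2) / (2^j - 1) < n/4 + j + 1`.
-/

namespace Finset

variable {α : Type*} [DecidableEq α]

theorem two_mul_card_filter_odd_card_inter_of_mem {S T : Finset α} {x : α} (hxS : x ∈ S)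
    (hxT : x ∈ T) : 2 * #{D ∈ S.powerset | Odd #(D ∩ T)} = 2 ^ #S := by
  have hx : x ∉ S.erase x := notMem_erase x S
  have hflip : ∀ D ∈ (S.erase x).powerset,
      ((if Odd #(D ∩ T) then 1 else 0) + if Odd #(insert x D ∩ T) then 1 else 0) = 1 := by
    intro D hD
    have hxD : x ∉ D ∩ T := fun h => hx (mem_powerset.1 hD (mem_inter.1 h).1)
    simp only [insert_inter_of_mem hxT, card_insert_of_notMem hxD, Nat.odd_add_one]
    split_ifs <;> rfl
  rw [card_filter, ← insert_erase hxS, sum_powerset_insert hx, ← sum_add_distrib,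
    sum_congr rfl hflip, sum_const, card_powerset, card_insert_of_notMem hx, smul_eq_mul,
    mul_one, pow_succ']

theorem two_mul_card_filter_odd_card_inter (S T : Finset α) :
    2 * #{D ∈ S.powerset | Odd #(D ∩ T)} = if Disjoint S T then 0 else 2 ^ #S := by
  split_ifs with h
  · rw [filter_false_of_mem fun D hD => ?_, card_empty]
    rw [disjoint_iff_inter_eq_empty.1 (disjoint_of_subset_left (mem_powerset.1 hD) h),
      card_empty]
    exact Nat.not_odd_zero
  · obtain ⟨x, hxS, hxT⟩ := not_disjoint_iff.1 h
    exact two_mul_card_filter_odd_card_inter_of_mem hxS hxT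

theorem exists_nonempty_mul_le_sum_powerset {S : Finset α} (hS : S.Nonempty) (f : Finset α → ℕ) :
    ∃ D : Finset α, D.Nonempty ∧ (2 ^ #S - 1) * f D ≤ ∑ D ∈ S.powerset, f D := by
  have hne : (S.powerset.erase ∅).Nonempty :=
    ⟨S, mem_erase.2 ⟨hS.ne_empty, mem_powerset_self S⟩⟩
  obtain ⟨D, hD, hmin⟩ := exists_min_image _ f hne
  refine ⟨D, nonempty_iff_ne_empty.2 (ne_of_mem_erase hD), ?_⟩
  calc (2 ^ #S - 1) * f D = #(S.powerset.erase ∅) • f D := by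
        rw [card_erase_of_mem (empty_mem_powerset S), card_powerset, smul_eq_mul]
    _ ≤ ∑ D ∈ S.powerset.erase ∅, f D := card_nsmul_le_sum _ _ _ hmin
    _ ≤ ∑ D ∈ S.powerset, f D := sum_le_sum_of_subset (erase_subset _ _)

end Finset

section

variable {V : Type*} [Fintype V] [DecidableEq V] (G : SimpleGraph V) [DecidableRel G.Adj]

theorem mem_oddNbhd_iff (D : Finset V) (v : V) :
    v ∈ oddNbhd G D ↔ Odd #(D ∩ G.neighborFinset v) := by
  simp only [oddNbhd, mem_filter, mem_univ, true_and]
  convert Iff.rfl using 3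
  ext u
  simp

theorem mem_union_oddNbhd_iff_odd {D : Finset V} (hD : G.IsIndepSet D) (v : V) :
    v ∈ D ∪ oddNbhd G D ↔ Odd #(D ∩ insert v (G.neighborFinset v)) := by
  rw [mem_union, mem_oddNbhd_iff]
  by_cases hv : v ∈ D
  · have hDv : D ∩ insert v (G.neighborFinset v) = {v} := by
      ext u
      simp only [mem_inter, mem_insert, SimpleGraph.mem_neighborFinset, mem_singleton]
      refine ⟨fun ⟨hu, h⟩ => h.resolve_right fun hvu => hD hv hu hvu.ne hvu, ?_⟩
      rintro rfl
      exact ⟨hv, Or.inl rfl⟩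
    simp [hv, hDv]
  · rw [inter_insert_of_notMem hv]
    simp [hv]

theorem two_mul_sum_card_union_oddNbhd {S : Finset V} (hS : G.IsIndepSet S) :
    2 * ∑ D ∈ S.powerset, #(D ∪ oddNbhd G D) =
      2 ^ #S * #{v | ¬Disjoint S (insert v (G.neighborFinset v))} := by
  have hcount (v : V) : 2 * #{D ∈ S.powerset | v ∈ D ∪ oddNbhd G D} =
      if Disjoint S (insert v (G.neighborFinset v)) then 0 else 2 ^ #S := by
    rw [← two_mul_card_filter_odd_card_inter, filter_congr fun D hD =>
      mem_union_oddNbhd_iff_odd G (hS.mono (coe_subset.2 (mem_powerset.1 hD))) v]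
  calc 2 * ∑ D ∈ S.powerset, #(D ∪ oddNbhd G D)
      = ∑ v, 2 * #{D ∈ S.powerset | v ∈ D ∪ oddNbhd G D} := by
        simp only [← mul_sum, card_filter]
        rw [sum_comm]
        simp only [← card_filter, filter_univ_mem]
    _ = 2 ^ #S * #{v | ¬Disjoint S (insert v (G.neighborFinset v))} := by
        simp_rw [hcount, sum_ite, sum_const_zero, sum_const, smul_eq_mul, zero_add, mul_comm]

theorem card_filter_not_disjoint_insert_neighborFinset_le {S I : Finset V} (hI : G.IsIndepSet I)
    (hSI : S ⊆ I) : #{v | ¬Disjoint S (insert v (G.neighborFinset v))} ≤ #S + #Iᶜ := by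
  refine (card_le_card fun v hv => ?_).trans (card_union_le S Iᶜ)
  obtain ⟨u, huS, hu⟩ := not_disjoint_iff.1 (mem_filter.1 hv).2
  rw [mem_insert, SimpleGraph.mem_neighborFinset] at hu
  rw [mem_union, mem_compl]
  by_contra! h
  obtain rfl | hvu := hu
  · exact h.1 huS
  · exact hI h.2 (hSI huS) hvu.ne hvu

theorem exists_two_mul_mul_card_union_oddNbhd_le {S I : Finset V} (hI : G.IsIndepSet I)
    (hSI : S ⊆ I) (hS : S.Nonempty) :
    ∃ D : Finset V, D.Nonempty ∧
      2 * (2 ^ #S - 1) * #(D ∪ oddNbhd G D) ≤ 2 ^ #S * (#S + #Iᶜ) := by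
  obtain ⟨D, hD, hle⟩ := exists_nonempty_mul_le_sum_powerset hS fun D => #(D ∪ oddNbhd G D)
  refine ⟨D, hD, ?_⟩
  calc 2 * (2 ^ #S - 1) * #(D ∪ oddNbhd G D)
      ≤ 2 * ∑ D ∈ S.powerset, #(D ∪ oddNbhd G D) := by
        rw [mul_assoc]
        exact Nat.mul_le_mul_left 2 hle
    _ = 2 ^ #S * #{v | ¬Disjoint S (insert v (G.neighborFinset v))} :=
        two_mul_sum_card_union_oddNbhd G (hI.mono (coe_subset.2 hSI))
    _ ≤ 2 ^ #S * (#S + #Iᶜ) :=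
        Nat.mul_le_mul_left _ (card_filter_not_disjoint_insert_neighborFinset_le G hI hSI)

end

section

variable {V : Type*} [Fintype V] [DecidableEq V] (G : SimpleGraph V)

theorem exists_four_mul_card_union_oddNbhd_le [Nonempty V] {I : Finset V}
    (hI : G.IsIndepSet I) (hIcard : Fintype.card V ≤ 2 * #I) :
    ∃ D : Finset V, D.Nonempty ∧
      4 * #(D ∪ oddNbhd G D) ≤ Fintype.card V + 4 * Nat.log 2 (Fintype.card V) + 3 := by
  classical
  set n := Fintype.card V
  set j := Nat.log 2 n
  have hpow_le : 2 ^ j ≤ n := Nat.pow_log_le_self 2 Fintype.card_ne_zero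
  have hlt_pow : n < 2 ^ (j + 1) := Nat.lt_pow_succ_log_self one_lt_two n
  rcases Nat.eq_zero_or_pos j with hj | hj
  · refine ⟨univ, univ_nonempty, ?_⟩
    have : #(univ ∪ oddNbhd G univ) ≤ n := card_le_univ _
    rw [hj] at hlt_pow ⊢
    omega
  have hjI : j ≤ #I := by
    have := Nat.mul_le_pow (by decide : 2 ≠ 1) j
    omega
  obtain ⟨S, hSI, hSj⟩ := exists_subset_card_eq hjI
  obtain ⟨D, hD, hle⟩ := exists_two_mul_mul_card_union_oddNbhd_le G hI hSI
    (card_pos.1 (hSj ▸ hj))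
  refine ⟨D, hD, ?_⟩
  have hIc : 2 * #Iᶜ ≤ n := by rw [card_compl]; omega
  rw [hSj] at hle
  obtain ⟨P, hP⟩ : ∃ P, 2 ^ j = P + 1 := ⟨2 ^ j - 1, by omega⟩
  rw [hP, Nat.add_sub_cancel] at hle
  have hP1 : 1 ≤ P := by have := Nat.le_self_pow hj.ne' 2; omega
  have hnP : n < 2 * (P + 1) := by rwa [pow_succ, mul_comm, hP] at hlt_pow
  -- If `4 |D ∪ Odd(D)| ≥ n + 4 j + 4`, then `hle` would give `2 (j + 1) (P - 1) + (2 (P + 1) - n) ≤ 0`.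
  by_contra! h
  nlinarith

theorem exists_isIndepSet_card_le_two_mul (V1 V2 : Finset V) (hdisj : Disjoint V1 V2)
    (hbip : ∀ u v : V, G.Adj u v → (u ∈ V1 ∧ v ∈ V2) ∨ (u ∈ V2 ∧ v ∈ V1)) :
    ∃ I : Finset V, G.IsIndepSet I ∧ Fintype.card V ≤ 2 * #I := by
  have hcompl {B : Finset V} (hB : ∀ u v, G.Adj u v → u ∈ B ∨ v ∈ B) : G.IsIndepSet ↑Bᶜ :=
    fun u hu v hv _ huv => by
      rw [coe_compl, Set.mem_compl_iff, mem_coe] at hu hv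
      exact (hB u v huv).elim hu hv
  have hsum : #V1 + #V2 ≤ Fintype.card V :=
    card_union_of_disjoint hdisj ▸ card_le_univ _
  rcases le_total #V1 #V2 with h | h
  · refine ⟨V1ᶜ, hcompl fun u v huv => ?_, by rw [card_compl]; omega⟩
    rcases hbip u v huv with ⟨hu, -⟩ | ⟨-, hv⟩
    exacts [Or.inl hu, Or.inr hv]
  · refine ⟨V2ᶜ, hcompl fun u v huv => ?_, by rw [card_compl]; omega⟩
    rcases hbip u v huv with ⟨-, hv⟩ | ⟨hu, -⟩
    exacts [Or.inr hv, Or.inl hu]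

end

theorem dloc_lt_quarter_bipartite_general {V : Type*} [Fintype V] [DecidableEq V]
    (G : SimpleGraph V)
    (V1 V2 : Finset V) (hdisj : Disjoint V1 V2)
    (hbip : ∀ u v : V, G.Adj u v → (u ∈ V1 ∧ v ∈ V2) ∨ (u ∈ V2 ∧ v ∈ V1))
    (dloc : ℕ)
    (hd : dloc + 1 = sInf {m : ℕ | ∃ D : Finset V, D.Nonempty ∧ (D ∪ oddNbhd G D).card = m}) :
    (dloc : ℝ) < (Fintype.card V : ℝ) / 4 + Real.logb 2 (Fintype.card V : ℝ) := by
  have hmin (D : Finset V) (hD : D.Nonempty) : dloc + 1 ≤ #(D ∪ oddNbhd G D) :=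
    hd ▸ Nat.sInf_le ⟨D, hD, rfl⟩
  -- `V` is nonempty, since otherwise the infimum in `hd` would be `sInf ∅ = 0`.
  obtain ⟨_, _, ⟨v, -⟩, -⟩ := Nat.nonempty_of_pos_sInf (by rw [← hd]; omega)
  have : Nonempty V := ⟨v⟩
  obtain ⟨I, hI, hIcard⟩ := exists_isIndepSet_card_le_two_mul G V1 V2 hdisj hbip
  obtain ⟨D, hD, hcard⟩ := exists_four_mul_card_union_oddNbhd_le G hI hIcard
  have h4 : (4 * (dloc + 1) : ℝ) ≤ Fintype.card V + 4 * Nat.log 2 (Fintype.card V) + 3 := by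
    exact_mod_cast (Nat.mul_le_mul_left 4 (hmin D hD)).trans hcard
  have hlog := Real.natLog_le_logb (Fintype.card V) 2
  push_cast at hlog
  linarith

/-- For any finite bipartite graph `G` of order `n > 0`, `δ_loc(G) < n/4 + log₂ n`, where
`δ_loc(G) + 1 = min_{∅ ≠ D ⊆ V} |D ∪ Odd_G(D)|`. -/
theorem dloc_lt_quarter_bipartite {V : Type*} [Fintype V] [DecidableEq V]
    (G : SimpleGraph V)
    (V1 V2 : Finset V) (hdisj : Disjoint V1 V2) (hcover : V1 ∪ V2 = Finset.univ)
    (hbip : ∀ u v : V, G.Adj u v → (u ∈ V1 ∧ v ∈ V2) ∨ (u ∈ V2 ∧ v ∈ V1))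
    (hn : 0 < Fintype.card V) (dloc : ℕ)
    (hd : dloc + 1 = sInf {m : ℕ | ∃ D : Finset V, D.Nonempty ∧ (D ∪ oddNbhd G D).card = m}) :
    (dloc : ℝ) < (Fintype.card V : ℝ) / 4 + Real.logb 2 (Fintype.card V : ℝ) :=
  dloc_lt_quarter_bipartite_general G V1 V2 hdisj hbip dloc hd
end

section
/- For any finite simple graph G of order n > 0, one has δ_loc(G) < (3/8)·n + log₂(n). -/
open Finset

/-!
Take a set `X` of `⌈(n + ⌊log₂ n⌋ + 1) / 2⌉` vertices and let `K = G.supportedIn X ⊆ 𝔽₂^V` be the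
space of vectors `x` such that `x` and `A x` (with `A` the adjacency matrix) both vanish outside
`X`. It is cut out by `2 (n - |X|)` linear conditions, so `|K| ≥ 2 ^ (2 |X| - n) > n ≥ |X|`. For
`x ≠ 0` in `K` and `D = supp x` we have `D ∪ Odd(D) = supp x ∪ supp (A x) ⊆ X`, of size at least
`δ_loc + 1`. For each `v ∈ X` the map `x ↦ (x v, (A x) v)` is linear into `𝔽₂²`, hence nonzero on
at most `3/4` of `K`. Double counting the pairs `(x, v)` gives
`(|K| - 1)(δ_loc + 1) ≤ (3/4) |X| |K|`, so `δ_loc + 1 ≤ (3/4)(|X| + 1)`.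
-/

open Matrix

namespace AddMonoidHom

variable {G H : Type*} [AddGroup G] [AddGroup H]

theorem card_le_card_ker_mul [Finite H] (f : G →+ H) :
    Nat.card G ≤ Nat.card f.ker * Nat.card H := by
  rw [← f.ker.card_mul_index, AddSubgroup.index_ker]
  exact Nat.mul_le_mul_left _ (Nat.card_le_card_of_injective _ Subtype.coe_injective)

theorem card_filter_ne_zero_mul_le [Fintype G] [Finite H] [DecidableEq H] (f : G →+ H) :
    #{x | f x ≠ 0} * Nat.card H ≤ Fintype.card G * (Nat.card H - 1) := by
  have hker : Nat.card f.ker = #{x | f x = 0} := by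
    simp [Nat.card_eq_fintype_card, ← Fintype.card_subtype, AddMonoidHom.mem_ker]
  have hsplit : #{x | f x = 0} + #{x | f x ≠ 0} = Fintype.card G :=
    card_filter_add_card_filter_not _
  have hle := f.card_le_card_ker_mul
  rw [hker, Nat.card_eq_fintype_card] at hle
  have hH : 1 ≤ Nat.card H := Nat.card_pos
  zify [hH] at hle ⊢
  push_cast [← hsplit] at hle ⊢
  nlinarith

end AddMonoidHom

namespace SimpleGraph

variable {V : Type*} [Fintype V] (G : SimpleGraph V)

open Classical in
noncomputable def evalNbhdSum (v : V) : (V → ZMod 2) →ₗ[ZMod 2] ZMod 2 × ZMod 2 :=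
  (LinearMap.proj v).prod ((LinearMap.proj v).comp (G.adjMatrix (ZMod 2)).mulVecLin)

open Classical in
theorem mem_oddNbhd_support_iff (x : V → ZMod 2) (v : V) :
    v ∈ oddNbhd G (Function.support x).toFinset ↔ (G.adjMatrix (ZMod 2) *ᵥ x) v ≠ 0 := by
  have hx : ∀ a : ZMod 2, a = if a ≠ 0 then 1 else 0 := by decide
  have hfilter : ((G.neighborFinset v).filter fun u => x u ≠ 0) =
      (Function.support x).toFinset.filter fun u => G.Adj v u := by
    ext u
    simp [and_comm]
  rw [adjMatrix_mulVec_apply, sum_congr rfl fun u _ => hx (x u), sum_boole, hfilter, Ne,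
    ZMod.natCast_eq_zero_iff_even, Nat.not_even_iff_odd]
  simp [oddNbhd]

open Classical in
theorem mem_support_union_oddNbhd_iff [DecidableEq V] (x : V → ZMod 2) (v : V) :
    v ∈ (Function.support x).toFinset ∪ oddNbhd G (Function.support x).toFinset ↔
      G.evalNbhdSum v x ≠ 0 := by
  rw [mem_union, mem_oddNbhd_support_iff]
  simp [evalNbhdSum, or_iff_not_imp_left]

noncomputable def supportedIn (X : Finset V) : Submodule (ZMod 2) (V → ZMod 2) :=
  LinearMap.ker (LinearMap.pi fun v : {v // v ∉ X} => G.evalNbhdSum v)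

theorem mem_supportedIn {X : Finset V} {x : V → ZMod 2} :
    x ∈ G.supportedIn X ↔ ∀ v ∉ X, G.evalNbhdSum v x = 0 := by
  simp [supportedIn, funext_iff]

theorem two_mul_card_le_add_finrank_supportedIn (X : Finset V) :
    2 * #X ≤ Fintype.card V + Module.finrank (ZMod 2) (G.supportedIn X) := by
  classical
  let f := LinearMap.pi fun v : {v // v ∉ X} => G.evalNbhdSum v
  have hrank : Module.finrank (ZMod 2) f.range + Module.finrank (ZMod 2) (G.supportedIn X) =
      Fintype.card V := by
    rw [supportedIn, f.finrank_range_add_finrank_ker, Module.finrank_fintype_fun_eq_card]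
  have hrange : Module.finrank (ZMod 2) f.range ≤ 2 * (Fintype.card V - #X) := by
    refine (Submodule.finrank_le _).trans_eq ?_
    rw [Module.finrank_pi_fintype, sum_const, Module.finrank_prod, Module.finrank_self, card_univ,
      Fintype.card_subtype_compl, Fintype.card_coe, smul_eq_mul, mul_comm]
  have := card_le_univ X
  omega

open Classical in
theorem card_sub_one_mul_le [DecidableEq V] {k : ℕ}
    (hk : ∀ D : Finset V, D.Nonempty → k ≤ #(D ∪ oddNbhd G D)) (X : Finset V) :
    ((Nat.card (G.supportedIn X) : ℝ) - 1) * k ≤ #X * (3 / 4 * Nat.card (G.supportedIn X)) := by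
  set K := G.supportedIn X
  let r (x : K) (v : V) : Prop := G.evalNbhdSum v x ≠ 0
  rw [Nat.card_eq_fintype_card]
  have hcount := card_nsmul_le_card_nsmul (R := ℝ) r (s := univ.erase 0) (t := X) (m := k)
    (n := 3 / 4 * Fintype.card K) ?_ ?_
  · rwa [card_erase_of_mem (mem_univ _), card_univ, nsmul_eq_mul, nsmul_eq_mul,
      Nat.cast_sub Fintype.card_pos, Nat.cast_one] at hcount
  · rintro x hx
    have hsupp : (Function.support (x : V → ZMod 2)).toFinset.Nonempty := by
      simpa [Function.support_nonempty_iff] using (mem_erase.1 hx).1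
    have habove : X.bipartiteAbove r x = (Function.support (x : V → ZMod 2)).toFinset ∪
        oddNbhd G (Function.support (x : V → ZMod 2)).toFinset := by
      ext v
      rw [mem_bipartiteAbove, mem_support_union_oddNbhd_iff]
      refine ⟨And.right, fun hv => ⟨?_, hv⟩⟩
      by_contra hvX
      exact hv (G.mem_supportedIn.1 x.2 v hvX)
    rw [habove]
    exact_mod_cast hk _ hsupp
  · intro v _
    let p := (G.evalNbhdSum v ∘ₗ K.subtype).toAddMonoidHom
    have hp : #{x | p x ≠ 0} * 4 ≤ Fintype.card K * 3 := by
      simpa using p.card_filter_ne_zero_mul_le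
    have hbelow : #((univ.erase 0).bipartiteBelow r v) ≤ #{x | p x ≠ 0} :=
      card_le_card (filter_subset_filter _ (erase_subset _ _))
    have : (#((univ.erase 0).bipartiteBelow r v) * 4 : ℝ) ≤ Fintype.card K * 3 := by
      exact_mod_cast (Nat.mul_le_mul_right 4 hbelow).trans hp
    linarith

theorem le_three_quarters_mul_card_add_one [DecidableEq V] {k : ℕ}
    (hk : ∀ D : Finset V, D.Nonempty → k ≤ #(D ∪ oddNbhd G D)) {X : Finset V}
    (hX : X.Nonempty) (hXK : #X < Nat.card (G.supportedIn X)) :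
    (k : ℝ) ≤ 3 / 4 * (#X + 1) := by
  have hcount := G.card_sub_one_mul_le hk X
  have hXK' : (#X : ℝ) + 1 ≤ Nat.card (G.supportedIn X) := by exact_mod_cast hXK
  have hX1 : (1 : ℝ) ≤ #X := by exact_mod_cast hX.card_pos
  refine le_of_mul_le_mul_left ?_ (by linarith : (0 : ℝ) < Nat.card (G.supportedIn X) - 1)
  nlinarith

end SimpleGraph

/-- For any finite simple graph `G` of order `n > 0`, `δ_loc(G) < (3/8) n + log₂ n`, where
`δ_loc(G) + 1 = min_{∅ ≠ D ⊆ V} |D ∪ Odd_G(D)|`. -/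
theorem dloc_lt_three_eighths {V : Type*} [Fintype V] [DecidableEq V]
    (G : SimpleGraph V)
    (hn : 0 < Fintype.card V) (dloc : ℕ)
    (hd : dloc + 1 = sInf {m : ℕ | ∃ D : Finset V, D.Nonempty ∧ (D ∪ oddNbhd G D).card = m}) :
    (dloc : ℝ) < (3 / 8 : ℝ) * (Fintype.card V : ℝ) + Real.logb 2 (Fintype.card V : ℝ) := by
  have hk (D : Finset V) (hD : D.Nonempty) : dloc + 1 ≤ #(D ∪ oddNbhd G D) :=
    hd ▸ Nat.sInf_le ⟨D, hD, rfl⟩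
  have hlog_lt : Nat.log 2 (Fintype.card V) < Fintype.card V := Nat.log_lt_self 2 hn.ne'
  obtain ⟨X, -, hX⟩ := exists_subset_card_eq (s := (univ : Finset V))
    (n := (Fintype.card V + Nat.log 2 (Fintype.card V) + 2) / 2) (by rw [card_univ]; omega)
  have hdim := G.two_mul_card_le_add_finrank_supportedIn X
  have hXK : #X < Nat.card (G.supportedIn X) := by
    rw [Module.natCard_eq_pow_finrank (K := ZMod 2), Nat.card_zmod]
    calc #X ≤ Fintype.card V := by omega
      _ < 2 ^ (Nat.log 2 (Fintype.card V) + 1) := Nat.lt_pow_succ_log_self one_lt_two _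
      _ ≤ 2 ^ Module.finrank (ZMod 2) (G.supportedIn X) := Nat.pow_le_pow_right two_pos (by omega)
  have hbound := G.le_three_quarters_mul_card_add_one hk (card_pos.1 (by omega)) hXK
  have h2X : (2 * #X : ℝ) ≤ Fintype.card V + Nat.log 2 (Fintype.card V) + 2 := by
    exact_mod_cast hX ▸ Nat.mul_div_le _ _
  push_cast at hbound
  obtain hn1 | hn2 : Fintype.card V = 1 ∨ 2 ≤ Fintype.card V := by omega
  · have hX1 : #X = 1 := by simp [hX, hn1]
    have : dloc = 0 := by
      rw [hX1] at hbound
      exact Nat.lt_one_iff.1 (by exact_mod_cast (show (dloc : ℝ) < 1 by linarith))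
    simp [this, hn1]
  · have hlog_pos : (1 : ℝ) ≤ Nat.log 2 (Fintype.card V) := by
      exact_mod_cast Nat.log_pos one_lt_two hn2
    have := Real.natLog_le_logb (Fintype.card V) 2
    push_cast at this
    linarith
end

section
/- Let G be a finite simple graph on n vertices and S a subset of its vertex set. The collection {D ⊆ S : Odd_G(D) ⊆ S}, identified with its indicator vectors in (ZMod 2)^V, is a linear subspace over the field with two elements of dimension at least 2·|S| − n. -/
open Finset

/-!
The collection is the kernel of `f ↦ (f|_{V ∖ S}, (A f)|_{V ∖ S})`, `A` the adjacency matrix over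
`𝔽₂`: on the indicator vector of `D` the first component vanishes iff `D ⊆ S`, and the second iff
`Odd_G(D) ⊆ S`, because `(A 1_D)_v` is the parity of the number of neighbours of `v` in `D`. The
codomain has dimension `2 (n - |S|)`, so by rank–nullity the kernel has dimension at least
`n - 2 (n - |S|) = 2 |S| - n`.
-/

lemma LinearMap.finrank_sub_finrank_le_finrank_ker {K M N : Type*} [DivisionRing K]
    [AddCommGroup M] [Module K M] [AddCommGroup N] [Module K N]
    [FiniteDimensional K M] [FiniteDimensional K N] (f : M →ₗ[K] N) :
    (Module.finrank K M : ℤ) - Module.finrank K N ≤ Module.finrank K (LinearMap.ker f) := by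
  have := f.finrank_range_add_finrank_ker
  have := Submodule.finrank_le (LinearMap.range f)
  omega

open Matrix

namespace Matrix

variable {K V : Type*} [Field K] [Fintype V]

def restrictOffSet (M : Matrix V V K) (S : Finset V) :
    (V → K) →ₗ[K] ({v // v ∉ S} → K) × ({v // v ∉ S} → K) :=
  let restrict := LinearMap.funLeft K K (Subtype.val : {v // v ∉ S} → V)
  restrict.prod (restrict ∘ₗ M.mulVecLin)

theorem mem_ker_restrictOffSet {M : Matrix V V K} {S : Finset V} {f : V → K} :
    f ∈ LinearMap.ker (M.restrictOffSet S) ↔ ∀ v ∉ S, f v = 0 ∧ (M *ᵥ f) v = 0 := by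
  simp [restrictOffSet, funext_iff, forall_and]

theorem two_mul_card_sub_card_le_finrank_ker_restrictOffSet [DecidableEq V]
    (M : Matrix V V K) (S : Finset V) :
    (2 * #S : ℤ) - Fintype.card V ≤ Module.finrank K (LinearMap.ker (M.restrictOffSet S)) := by
  have hcompl : Fintype.card {v // v ∉ S} = Fintype.card V - #S := by
    rw [Fintype.card_subtype_compl, Fintype.card_coe]
  have := (M.restrictOffSet S).finrank_sub_finrank_le_finrank_ker
  rw [Module.finrank_prod, Module.finrank_fintype_fun_eq_card, Module.finrank_fintype_fun_eq_card,
    hcompl] at this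
  have := S.card_le_univ
  omega

end Matrix

namespace SimpleGraph

variable {V : Type*} [Fintype V] [DecidableEq V] (G : SimpleGraph V) [DecidableRel G.Adj]

theorem adjMatrix_mulVec_indicator_eq_zero_iff {D : Finset V} {v : V} :
    (G.adjMatrix (ZMod 2) *ᵥ fun u => if u ∈ D then 1 else 0) v = 0 ↔ v ∉ oddNbhd G D := by
  rw [adjMatrix_mulVec_apply, sum_boole, ZMod.natCast_eq_zero_iff_even, oddNbhd, mem_filter,
    ← Nat.not_odd_iff_even]
  simp only [mem_univ, true_and]
  convert Iff.rfl using 4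
  ext u
  simp [and_comm]

theorem indicator_mem_ker_restrictOffSet_iff {S D : Finset V} :
    (fun u => if u ∈ D then 1 else 0) ∈ LinearMap.ker ((G.adjMatrix (ZMod 2)).restrictOffSet S) ↔
      D ⊆ S ∧ oddNbhd G D ⊆ S := by
  simp only [mem_ker_restrictOffSet, forall_and, adjMatrix_mulVec_indicator_eq_zero_iff,
    ite_eq_right_iff, one_ne_zero, imp_false, subset_iff]
  exact and_congr (forall_congr' fun _ => not_imp_not) (forall_congr' fun _ => not_imp_not)

end SimpleGraph

theorem ZMod.exists_finset_eq_indicator {V : Type*} [DecidableEq V] [Fintype V]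
    (f : V → ZMod 2) :
    ∃ D : Finset V, f = fun v => if v ∈ D then 1 else 0 :=
  ⟨univ.filter (f · = 1), funext fun v => by
    simpa using (by decide : ∀ x : ZMod 2, x = if x = 1 then 1 else 0) (f v)⟩

/-- For a finite simple graph `G` on `n` vertices and a set `S` of vertices, the collection
`{D ⊆ S : Odd_G(D) ⊆ S}`, identified with indicator vectors in `(ZMod 2)^V`, is a linear
subspace over `ZMod 2` of dimension at least `2|S| - n`. -/
theorem kernel_dimension_bound {V : Type*} [Fintype V] [DecidableEq V]
    (G : SimpleGraph V) (S : Finset V) :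
    ∃ W : Submodule (ZMod 2) (V → ZMod 2),
      (∀ f : V → ZMod 2, f ∈ W ↔
        ∃ D : Finset V, D ⊆ S ∧ oddNbhd G D ⊆ S ∧ f = fun v => if v ∈ D then 1 else 0) ∧
      (2 * S.card : ℤ) - (Fintype.card V : ℤ) ≤ (Module.finrank (ZMod 2) W : ℤ) := by
  classical
  refine ⟨LinearMap.ker ((G.adjMatrix (ZMod 2)).restrictOffSet S), fun f => ⟨fun hf => ?_, ?_⟩,
    Matrix.two_mul_card_sub_card_le_finrank_ker_restrictOffSet _ S⟩
  · obtain ⟨D, rfl⟩ := ZMod.exists_finset_eq_indicator f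
    obtain ⟨hDS, hOdd⟩ := G.indicator_mem_ker_restrictOffSet_iff.1 hf
    exact ⟨D, hDS, hOdd, rfl⟩
  · rintro ⟨D, hDS, hOdd, rfl⟩
    exact G.indicator_mem_ker_restrictOffSet_iff.2 ⟨hDS, hOdd⟩
end

section
/- Let G be a finite bipartite graph with parts V1 and V2 and a nonempty vertex set. Then the minimum of |D ∪ Odd_G(D)| over all nonempty subsets D of the vertex set is equal to the minimum of |D ∪ Odd_G(D)| over all nonempty subsets D that are entirely contained in V1 or entirely contained in V2. -/
/-!
If every edge has exactly one endpoint in `A`, then passing from `D` to `D ∩ A` can only shrink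
`D ∪ Odd(D)`: a vertex with an odd number of neighbours in `D ∩ A` has a neighbour in `A`, so it lies
outside `A`, all its neighbours lie in `A`, and its neighbourhoods in `D` and in `D ∩ A` coincide.
Every nonempty `D` meets `V1` or `V2`, so each value `|D ∪ Odd(D)|` is bounded below by the value
at the nonempty one-sided set `D ∩ Vᵢ`.
-/

open Finset

section

variable {V : Type*} {G : SimpleGraph V}

open Classical in
theorem mem_oddNbhd [Fintype V] {D : Finset V} {v : V} :
    v ∈ oddNbhd G D ↔ Odd (D.filter fun u => G.Adj v u).card := by
  simp [oddNbhd]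

theorem oddNbhd_inter_subset [Fintype V] [DecidableEq V] {A : Finset V}
    (hA : ∀ u v, G.Adj u v → (u ∈ A ↔ v ∉ A)) (D : Finset V) :
    oddNbhd G (D ∩ A) ⊆ oddNbhd G D := by
  classical
  intro v hv
  rw [mem_oddNbhd] at hv ⊢
  obtain ⟨u, hu⟩ := card_pos.1 hv.pos
  rw [mem_filter, mem_inter] at hu
  have hvA : v ∉ A := (hA v u hu.2).not_left.mpr hu.1.2
  have hnbhd : (D.filter fun w => G.Adj v w) = (D ∩ A).filter fun w => G.Adj v w := by
    ext w
    simp only [mem_filter, mem_inter]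
    exact ⟨fun ⟨hw, hvw⟩ => ⟨⟨hw, (hA v w hvw).not_left.mp hvA⟩, hvw⟩,
      fun ⟨⟨hw, _⟩, hvw⟩ => ⟨hw, hvw⟩⟩
  rwa [hnbhd]

theorem inter_union_oddNbhd_inter_subset [Fintype V] [DecidableEq V] {A : Finset V}
    (hA : ∀ u v, G.Adj u v → (u ∈ A ↔ v ∉ A)) (D : Finset V) :
    D ∩ A ∪ oddNbhd G (D ∩ A) ⊆ D ∪ oddNbhd G D :=
  union_subset_union inter_subset_left (oddNbhd_inter_subset hA D)

theorem adj_mem_iff_notMem_of_bipartition {V1 V2 : Finset V} (hdisj : Disjoint V1 V2)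
    (hbip : ∀ u v : V, G.Adj u v → (u ∈ V1 ∧ v ∈ V2) ∨ (u ∈ V2 ∧ v ∈ V1)) :
    ∀ u v, G.Adj u v → (u ∈ V1 ↔ v ∉ V1) := by
  intro u v huv
  rcases hbip u v huv with ⟨hu, hv⟩ | ⟨hu, hv⟩
  · exact iff_of_true hu (disjoint_right.1 hdisj hv)
  · exact iff_of_false (disjoint_right.1 hdisj hu) (not_not.mpr hv)

end

theorem bipartite_min_restrict_to_sides_general {V : Type*} [Fintype V] [DecidableEq V]
    (G : SimpleGraph V)
    (V1 V2 : Finset V) (hdisj : Disjoint V1 V2) (hcover : V1 ∪ V2 = Finset.univ)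
    (hbip : ∀ u v : V, G.Adj u v → (u ∈ V1 ∧ v ∈ V2) ∨ (u ∈ V2 ∧ v ∈ V1)) :
    sInf {m : ℕ | ∃ D : Finset V, D.Nonempty ∧ (D ∪ oddNbhd G D).card = m} =
      sInf {m : ℕ | ∃ D : Finset V, D.Nonempty ∧ (D ⊆ V1 ∨ D ⊆ V2) ∧
        (D ∪ oddNbhd G D).card = m} := by
  have hV1 := adj_mem_iff_notMem_of_bipartition hdisj hbip
  have hV2 := adj_mem_iff_notMem_of_bipartition hdisj.symm fun u v huv => (hbip u v huv).symm
  refine csInf_eq_csInf_of_forall_exists_le ?_ ?_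
  · rintro _ ⟨D, ⟨v, hv⟩, rfl⟩
    rcases mem_union.1 (hcover ▸ mem_univ v : v ∈ V1 ∪ V2) with h | h
    · exact ⟨_, ⟨D ∩ V1, ⟨v, mem_inter.2 ⟨hv, h⟩⟩, .inl inter_subset_right, rfl⟩,
        card_le_card (inter_union_oddNbhd_inter_subset hV1 D)⟩
    · exact ⟨_, ⟨D ∩ V2, ⟨v, mem_inter.2 ⟨hv, h⟩⟩, .inr inter_subset_right, rfl⟩,
        card_le_card (inter_union_oddNbhd_inter_subset hV2 D)⟩
  · rintro _ ⟨D, hD, -, rfl⟩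
    exact ⟨_, ⟨D, hD, rfl⟩, le_rfl⟩

/-- For a finite bipartite graph `G` with parts `V1`, `V2` and a nonempty vertex set, the minimum
of `|D ∪ Odd_G(D)|` over nonempty subsets `D` of the vertex set equals the minimum over nonempty
subsets `D` entirely contained in `V1` or in `V2`. -/
theorem bipartite_min_restrict_to_sides {V : Type*} [Fintype V] [DecidableEq V] [Nonempty V]
    (G : SimpleGraph V)
    (V1 V2 : Finset V) (hdisj : Disjoint V1 V2) (hcover : V1 ∪ V2 = Finset.univ)
    (hbip : ∀ u v : V, G.Adj u v → (u ∈ V1 ∧ v ∈ V2) ∨ (u ∈ V2 ∧ v ∈ V1)) :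
    sInf {m : ℕ | ∃ D : Finset V, D.Nonempty ∧ (D ∪ oddNbhd G D).card = m} =
      sInf {m : ℕ | ∃ D : Finset V, D.Nonempty ∧ (D ⊆ V1 ∨ D ⊆ V2) ∧
        (D ∪ oddNbhd G D).card = m} :=
  bipartite_min_restrict_to_sides_general G V1 V2 hdisj hcover hbip
end
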